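/- arXiv:2605.17973 — 3 statements merged into one kernel-verified Lean document; each statement's English description precedes it below -/
import Mathlib

section
/- Let p be an odd prime and N ≥ 1. Let (ℤ/p^Nℤ)^×/{±1} denote the quotient of the unit group of ℤ/p^Nℤ by the subgroup {±1}. Then the map δ : B_N → (ℤ/p^Nℤ)^×/{±1} sending s to the class of (2s+1)·2^{-1} (i.e., the class of the unit (2s+1)/2 in ℤ/p^Nℤ) is a bijection. In particular, #((ℤ/p^Nℤ)^×/{±1}) = (p−1)·p^(N−1)/2. -/
/-- For an odd prime `p`, `s % p = (p-1)/2` iff `p ∣ 2s+1`. -/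
lemma aux_mod (p : ℕ) (hodd : Odd p) (hp1 : 1 < p) (s : ℕ) :
    s % p = (p - 1) / 2 ↔ p ∣ (2 * s + 1) := by
  obtain ⟨m, hm⟩ := hodd
  have hr : s % p < p := Nat.mod_lt _ (by omega)
  have he : p * (s / p) + s % p = s := Nat.div_add_mod s p
  set r := s % p with hrdef
  set e := s / p with hedef
  have hsplit : 2 * s + 1 = p * (2 * e) + (2 * r + 1) := by
    rw [← he]; ring
  have hmod : (2 * s + 1) % p = (2 * r + 1) % p := by
    rw [hsplit, Nat.mul_add_mod]
  constructor
  · intro h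
    have h2r : 2 * r + 1 = p := by omega
    exact ⟨2 * e + 1, by rw [hsplit, h2r]; ring⟩
  · intro h
    have h' : p ∣ 2 * r + 1 := by
      rwa [Nat.dvd_iff_mod_eq_zero, hmod, ← Nat.dvd_iff_mod_eq_zero] at h
    obtain ⟨k, hk⟩ := h'
    have hkle : k ≤ 1 := by
      by_contra hgt
      have : p * 2 ≤ p * k := Nat.mul_le_mul_left p (by omega)
      omega
    interval_cases k <;> omega

/-- For an odd prime `p` and `N ≥ 1`, the map `δ : B_N → (ℤ/p^Nℤ)ˣ/{±1}`
sending `s` to the class of the unit `(2s+1)/2` is a bijection; in particular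
the quotient has cardinality `(p−1)·p^(N−1)/2`. -/
theorem stmt1 (p N : ℕ) (hp : p.Prime) (hodd : Odd p) (hN : 1 ≤ N) :
    ∃ δ : {a : ℕ // a ≤ (p ^ N - 3) / 2 ∧ a % p ≠ (p - 1) / 2} →
        (ZMod (p ^ N))ˣ ⧸ Subgroup.zpowers (-1 : (ZMod (p ^ N))ˣ),
      Function.Bijective δ ∧
      (∀ s u, δ s = QuotientGroup.mk u →
        (u : ZMod (p ^ N)) = ((2 * s.1 + 1 : ℕ) : ZMod (p ^ N)) * (2 : ZMod (p ^ N))⁻¹ ∨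
        (u : ZMod (p ^ N)) = -(((2 * s.1 + 1 : ℕ) : ZMod (p ^ N)) * (2 : ZMod (p ^ N))⁻¹)) ∧
      Nat.card ((ZMod (p ^ N))ˣ ⧸ Subgroup.zpowers (-1 : (ZMod (p ^ N))ˣ)) =
        (p - 1) * p ^ (N - 1) / 2 := by
  have hp2 : p ≠ 2 := by rintro rfl; exact (Nat.not_odd_iff_even.mpr even_two) hodd
  have hp3 : 3 ≤ p := by have := hp.two_le; omega
  set q := p ^ N with hqdef
  have hq3 : 3 ≤ q := le_trans hp3 (Nat.le_self_pow (by omega) p)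
  have hqodd : Odd q := hodd.pow
  have hq2 : q % 2 = 1 := Nat.odd_iff.mp hqodd
  haveI : NeZero q := ⟨by omega⟩
  haveI : Fact (2 < q) := ⟨by omega⟩
  -- coprimality facts
  have h2cop : Nat.Coprime 2 q := Nat.coprime_two_left.mpr hqodd
  set u2 : (ZMod q)ˣ := ZMod.unitOfCoprime 2 h2cop with hu2def
  have hu2coe : ((u2 : ZMod q)) = 2 := by simp [hu2def]
  have hpdvdq : p ∣ q := dvd_pow_self p (by omega)
  have hcop : ∀ s : {a : ℕ // a ≤ (q - 3) / 2 ∧ a % p ≠ (p - 1) / 2},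
      Nat.Coprime (2 * s.1 + 1) q := by
    intro s
    have hnd : ¬ p ∣ (2 * s.1 + 1) := fun h =>
      s.2.2 ((aux_mod p hodd (by omega) s.1).mpr h)
    exact Nat.Coprime.pow_right _ ((hp.coprime_iff_not_dvd).mpr hnd).symm
  set δ : {a : ℕ // a ≤ (q - 3) / 2 ∧ a % p ≠ (p - 1) / 2} →
      (ZMod q)ˣ ⧸ Subgroup.zpowers (-1 : (ZMod q)ˣ) :=
    fun s => QuotientGroup.mk (ZMod.unitOfCoprime (2 * s.1 + 1) (hcop s) * u2⁻¹) with hδdef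
  have hu : IsUnit (2 : ZMod q) := ⟨u2, hu2coe⟩
  have hmul2 : (2 : ZMod q) * (2 : ZMod q)⁻¹ = 1 := ZMod.mul_inv_of_unit _ hu
  have h2inv : (2 : ZMod q)⁻¹ * 2 = 1 := by rw [mul_comm]; exact hmul2
  -- coercion of inverse of 2
  have hinv2 : ((u2⁻¹ : (ZMod q)ˣ) : ZMod q) = (2 : ZMod q)⁻¹ := by
    have h1 : (2 : ZMod q) * ((u2⁻¹ : (ZMod q)ˣ) : ZMod q) = 1 := by
      rw [← hu2coe, ← Units.val_mul, mul_inv_cancel, Units.val_one]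
    exact hu.mul_left_cancel (h1.trans hmul2.symm)
  have hval : ∀ s, ((ZMod.unitOfCoprime (2 * s.1 + 1) (hcop s) * u2⁻¹ : (ZMod q)ˣ) : ZMod q)
      = ((2 * s.1 + 1 : ℕ) : ZMod q) * (2 : ZMod q)⁻¹ := by
    intro s
    rw [Units.val_mul, hinv2, ZMod.coe_unitOfCoprime]
  have hcancel : ∀ a b : ZMod q, a * (2 : ZMod q)⁻¹ = b * (2 : ZMod q)⁻¹ → a = b := by
    intro a b hab
    have := congrArg (fun z => z * (2 : ZMod q)) hab
    simpa only [mul_assoc, h2inv, mul_one] using this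
  -- membership in zpowers (-1)
  have hmem : ∀ x : (ZMod q)ˣ, x ∈ Subgroup.zpowers (-1 : (ZMod q)ˣ) ↔ x = 1 ∨ x = -1 := by
    intro x
    constructor
    · rintro ⟨k, rfl⟩
      have hsq : (-1 : (ZMod q)ˣ) * (-1) = 1 := by simp
      rcases Int.even_or_odd k with ⟨j, rfl⟩ | ⟨j, rfl⟩
      · left
        show (-1 : (ZMod q)ˣ) ^ (j + j) = 1
        rw [zpow_add, ← mul_zpow, hsq, one_zpow]
      · right
        show (-1 : (ZMod q)ˣ) ^ (2 * j + 1) = -1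
        rw [zpow_add, zpow_one, two_mul, zpow_add, ← mul_zpow, hsq, one_zpow, one_mul]
    · rintro (rfl | rfl)
      · exact one_mem _
      · exact Subgroup.mem_zpowers _
  have hmk : ∀ a b : (ZMod q)ˣ, (QuotientGroup.mk a : (ZMod q)ˣ ⧸ Subgroup.zpowers (-1 : (ZMod q)ˣ))
      = QuotientGroup.mk b ↔ b = a ∨ b = -a := by
    intro a b
    rw [QuotientGroup.eq, hmem]
    constructor
    · rintro (h | h)
      · left; rwa [inv_mul_eq_one, eq_comm] at h
      · right; rw [inv_mul_eq_iff_eq_mul, mul_neg_one] at h; exact h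
    · rintro (rfl | rfl)
      · left; simp
      · right; simp [mul_neg_one]
  -- bounds
  have hbound : ∀ s : {a : ℕ // a ≤ (q - 3) / 2 ∧ a % p ≠ (p - 1) / 2},
      2 * s.1 + 1 ≤ q - 2 := by
    intro s
    have := s.2.1
    omega
  -- injectivity
  have hinj : Function.Injective δ := by
    intro s t hst
    rw [hδdef, hmk] at hst
    rcases hst with h | h
    · have h' := congrArg (Units.val (α := ZMod q)) h
      rw [hval, hval] at h'
      have h'' := hcancel _ _ h'
      have hs := hbound s; have ht := hbound t
      have : 2 * t.1 + 1 = 2 * s.1 + 1 := by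
        have := congrArg ZMod.val h''
        rwa [ZMod.val_cast_of_lt (by omega), ZMod.val_cast_of_lt (by omega)] at this
      exact Subtype.ext (by omega)
    · exfalso
      have h' := congrArg (Units.val (α := ZMod q)) h
      rw [Units.val_neg, hval, hval, ← neg_mul] at h'
      have h'' := hcancel _ _ h'
      have hsum : (((2 * t.1 + 1) + (2 * s.1 + 1) : ℕ) : ZMod q) = 0 := by
        push_cast
        push_cast at h''
        rw [h'']; ring
      rw [ZMod.natCast_eq_zero_iff] at hsum
      have hs := hbound s; have ht := hbound t
      obtain ⟨k, hk⟩ := hsum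
      have hkle : k ≤ 1 := by
        by_contra hgt
        have : q * 2 ≤ q * k := Nat.mul_le_mul_left q (by omega)
        omega
      interval_cases k <;> omega
  -- surjectivity
  have hsurj : Function.Surjective δ := by
    intro c
    induction c using QuotientGroup.induction_on with
    | H u =>
    set x : (ZMod q)ˣ := u2 * u with hxdef
    set v : ℕ := ((x : ZMod q)).val with hvdef
    have hvlt : v < q := ZMod.val_lt _
    have hvcast : ((v : ℕ) : ZMod q) = (x : ZMod q) := by
      simp [hvdef]
    have hvcop : Nat.Coprime v q := by
      rw [← ZMod.isUnit_iff_coprime, hvcast]; exact x.isUnit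
    have hv0 : v ≠ 0 := by
      rintro h
      rw [h] at hvcop
      simp [Nat.Coprime] at hvcop
      omega
    -- choose an odd representative w
    obtain ⟨w, hwodd, hwlt, hw0, hwcop, hwcast⟩ :
        ∃ w : ℕ, w % 2 = 1 ∧ w < q ∧ w ≠ 0 ∧ Nat.Coprime w q ∧
          (((w : ℕ) : ZMod q) = (x : ZMod q) ∨ ((w : ℕ) : ZMod q) = -(x : ZMod q)) := by
      rcases Nat.even_or_odd v with hev | hod
      · have hneg : ((q - v : ℕ) : ZMod q) = -(x : ZMod q) := by
          rw [Nat.cast_sub (by omega), ZMod.natCast_self, hvcast]; ring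
        refine ⟨q - v, ?_, by omega, by omega, ?_, Or.inr hneg⟩
        · rw [Nat.even_iff] at hev; omega
        · rw [← ZMod.isUnit_iff_coprime, hneg]
          exact x.isUnit.neg
      · exact ⟨v, Nat.odd_iff.mp hod, hvlt, hv0, hvcop, Or.inl hvcast⟩
    have hwle : w ≤ q - 2 := by omega
    have hw2 : 2 * ((w - 1) / 2) + 1 = w := by omega
    have hsmem : (w - 1) / 2 ≤ (q - 3) / 2 ∧ ((w - 1) / 2) % p ≠ (p - 1) / 2 := by
      refine ⟨by omega, fun h => ?_⟩
      have hdvd : p ∣ (2 * ((w - 1) / 2) + 1) := (aux_mod p hodd (by omega) _).mp h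
      rw [hw2] at hdvd
      have h1 : p ∣ 1 := hwcop ▸ Nat.dvd_gcd hdvd hpdvdq
      have := Nat.le_of_dvd one_pos h1
      omega
    refine ⟨⟨(w - 1) / 2, hsmem⟩, ?_⟩
    rw [hδdef]
    simp only
    rw [hmk]
    set s : {a : ℕ // a ≤ (q - 3) / 2 ∧ a % p ≠ (p - 1) / 2} := ⟨(w - 1) / 2, hsmem⟩
    have hs1 : s.1 = (w - 1) / 2 := rfl
    have hcoe : ((ZMod.unitOfCoprime (2 * s.1 + 1) (hcop s) : (ZMod q)ˣ) : ZMod q)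
        = ((w : ℕ) : ZMod q) := by
      rw [ZMod.coe_unitOfCoprime, hs1, hw2]
    rcases hwcast with h | h
    · left
      have hux : ZMod.unitOfCoprime (2 * s.1 + 1) (hcop s) = x :=
        Units.ext (by rw [hcoe, h])
      rw [hux, hxdef, mul_comm u2 u, mul_assoc, mul_inv_cancel, mul_one]
    · right
      have hux : ZMod.unitOfCoprime (2 * s.1 + 1) (hcop s) = -x :=
        Units.ext (by rw [hcoe, h, Units.val_neg])
      rw [hux, hxdef, neg_mul, mul_comm u2 u, mul_assoc, mul_inv_cancel, mul_one,
        neg_neg]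
  -- cardinality
  have hcardH : Nat.card (Subgroup.zpowers (-1 : (ZMod q)ˣ)) = 2 := by
    rw [Nat.card_zpowers]
    apply orderOf_eq_prime
    · simp
    · intro h
      have := congrArg (fun x : (ZMod q)ˣ => (x : ZMod q)) h
      simp only [Units.val_neg, Units.val_one] at this
      exact ZMod.neg_one_ne_one this
  have hcardG : Nat.card ((ZMod q)ˣ) = (p - 1) * p ^ (N - 1) := by
    rw [Nat.card_eq_fintype_card, ZMod.card_units_eq_totient, hqdef,
      Nat.totient_prime_pow hp (by omega), mul_comm]
  have hquot := Subgroup.card_eq_card_quotient_mul_card_subgroup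
    (Subgroup.zpowers (-1 : (ZMod q)ˣ))
  rw [hcardH, hcardG] at hquot
  refine ⟨δ, ⟨hinj, hsurj⟩, ?_, by omega⟩
  intro s u hu'
  rw [hδdef, hmk] at hu'
  rcases hu' with h | h
  · left; rw [h, hval]
  · right; rw [h, Units.val_neg, hval]
end

section
/- Let p be an odd prime and N ≥ 1, and set q := p^N. Then Σ_{j=1, p∤j}^{(q−1)/2} j·(q − j) = q·(p−1)·(p^(2N−1) + 1)/12. -/
open Finset

lemma aux_sum6 (c : ℚ) (m : ℕ) :
    ∑ j ∈ Finset.Icc 1 m, (j : ℚ) * (c - j)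
      = c * m * (m + 1) / 2 - m * (m + 1) * (2 * m + 1) / 6 := by
  induction m with
  | zero => simp
  | succ n ih =>
    rw [Finset.sum_Icc_succ_top (by omega)]
    push_cast
    push_cast at ih
    rw [ih]; ring

/-- For an odd prime `p`, `N ≥ 1`, `q := p^N`:
`Σ_{1 ≤ j ≤ (q−1)/2, p ∤ j} j(q − j) = q(p−1)(p^(2N−1)+1)/12`. -/
theorem stmt6 (p N : ℕ) (hp : p.Prime) (hodd : Odd p) (hN : 1 ≤ N) :
    ∑ j ∈ (Finset.Icc 1 ((p ^ N - 1) / 2)).filter (fun j => ¬ p ∣ j),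
        (j : ℚ) * ((p : ℚ) ^ N - j)
      = (p : ℚ) ^ N * ((p : ℚ) - 1) * ((p : ℚ) ^ (2 * N - 1) + 1) / 12 := by
  have hp1 : 1 < p := hp.one_lt
  set m : ℕ := (p ^ N - 1) / 2 with hm
  set m' : ℕ := (p ^ (N - 1) - 1) / 2 with hm'
  obtain ⟨r, hr⟩ := hodd.pow (n := N)
  obtain ⟨r', hr'⟩ := hodd.pow (n := N - 1)
  have h1 : p ^ N = 2 * m + 1 := by
    have : 1 ≤ p ^ N := Nat.one_le_pow _ _ (by omega)
    omega
  have h2 : p ^ (N - 1) = 2 * m' + 1 := by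
    have : 1 ≤ p ^ (N - 1) := Nat.one_le_pow _ _ (by omega)
    omega
  have hq : p ^ N = p * p ^ (N - 1) := by
    conv_lhs => rw [show N = (N - 1) + 1 by omega, pow_succ]
    ring
  obtain ⟨s, hs⟩ := hodd
  have hmm : m = p * m' + (p - 1) / 2 := by
    rw [h1, h2] at hq
    have hK : p * (2 * m' + 1) = 2 * (p * m') + p := by ring
    set K := p * m' with hKdef
    omega
  have hdiv : m / p = m' := by
    rw [hmm, Nat.mul_add_div (by omega), Nat.div_eq_of_lt (by omega)]
    omega
  have hset : (Finset.Icc 1 m).filter (fun j => p ∣ j)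
      = (Finset.Icc 1 m').image (fun k => p * k) := by
    ext j
    simp only [mem_filter, mem_image, mem_Icc]
    constructor
    · rintro ⟨⟨h1j, h2j⟩, k, rfl⟩
      refine ⟨k, ⟨by nlinarith [hp1], ?_⟩, rfl⟩
      rw [← hdiv]
      exact (Nat.le_div_iff_mul_le (by omega)).mpr (by rw [mul_comm]; exact h2j)
    · rintro ⟨k, ⟨hk1, hk2⟩, rfl⟩
      have hle : p * k ≤ p * m' := Nat.mul_le_mul_left _ hk2
      exact ⟨⟨by nlinarith [hp1], by omega⟩, ⟨k, rfl⟩⟩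
  have hsplit := Finset.sum_filter_add_sum_filter_not (Finset.Icc 1 m)
    (fun j => p ∣ j) (fun j => (j : ℚ) * ((p : ℚ) ^ N - j))
  have hinj : Set.InjOn (fun k => p * k) (Finset.Icc 1 m') := by
    intro a _ b _ h
    exact Nat.eq_of_mul_eq_mul_left (by omega) h
  have himg : ∑ j ∈ (Finset.Icc 1 m).filter (fun j => p ∣ j),
      (j : ℚ) * ((p : ℚ) ^ N - j)
      = ∑ k ∈ Finset.Icc 1 m', ((p : ℚ)) ^ 2 * ((k : ℚ) * ((p : ℚ) ^ (N - 1) - k)) := by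
    rw [hset, Finset.sum_image hinj]
    refine Finset.sum_congr rfl fun k _ => ?_
    have hQ : (p : ℚ) ^ N = (p : ℚ) * (p : ℚ) ^ (N - 1) := by
      exact_mod_cast congrArg (Nat.cast : ℕ → ℚ) hq
    push_cast
    rw [hQ]; ring
  have hmain : ∑ j ∈ (Finset.Icc 1 m).filter (fun j => ¬ p ∣ j),
      (j : ℚ) * ((p : ℚ) ^ N - j)
      = (∑ j ∈ Finset.Icc 1 m, (j : ℚ) * ((p : ℚ) ^ N - j))
        - ∑ j ∈ (Finset.Icc 1 m).filter (fun j => p ∣ j),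
            (j : ℚ) * ((p : ℚ) ^ N - j) := by
    rw [← hsplit]; ring
  rw [hmain, himg, ← Finset.mul_sum, aux_sum6, aux_sum6]
  have hcm : (m : ℚ) = ((p : ℚ) ^ N - 1) / 2 := by
    have : ((p : ℚ) ^ N) = 2 * m + 1 := by exact_mod_cast congrArg (Nat.cast : ℕ → ℚ) h1
    linarith
  have hcm' : (m' : ℚ) = ((p : ℚ) ^ (N - 1) - 1) / 2 := by
    have : ((p : ℚ) ^ (N - 1)) = 2 * m' + 1 := by
      exact_mod_cast congrArg (Nat.cast : ℕ → ℚ) h2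
    linarith
  have hQ : (p : ℚ) ^ N = (p : ℚ) * (p : ℚ) ^ (N - 1) := by
    exact_mod_cast congrArg (Nat.cast : ℕ → ℚ) hq
  have hQ2 : (p : ℚ) ^ (2 * N - 1) = (p : ℚ) * ((p : ℚ) ^ (N - 1)) ^ 2 := by
    rw [← pow_mul, ← pow_succ']
    congr 1
    omega
  rw [hcm, hcm', hQ, hQ2]
  ring
end

section
/- Let p be an odd prime and N ≥ 1 with 4 | p^N − 1, and let λ := (p^N − 1)/4. Then the set B_{N,(λ,λ,λ,λ),0,4}, defined as the set of η ∈ B_N satisfying 0 ≤ η ≤ min(2λ', p^{N'} − 2 − 2λ') after replacing (η, λ) by ([η]_{N'}, [λ]_{N'}) for every 1 ≤ N' ≤ N (with [a]_N := a for a ∈ B_N), equals all of B_N. Equivalently, for every η ∈ B_N and every 1 ≤ N' ≤ N: [η]_{N'} ≤ min(2[λ]_{N'}, p^{N'} − 2 − 2[λ]_{N'}). -/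
/-- `[a]_M := (p^M−1)/2 − |(a mod p^M) − (p^M−1)/2|`. -/
def brk (p M : ℕ) (a : ℤ) : ℤ :=
  ((p : ℤ) ^ M - 1) / 2 - |a % (p : ℤ) ^ M - ((p : ℤ) ^ M - 1) / 2|

/-- When `4 ∣ p^N − 1` and `λ = (p^N−1)/4`, every `η ∈ B_N` satisfies all the
level-`N'` triangle inequalities, i.e. `B_{N,(λ,λ,λ,λ),0,4} = B_N`. -/
theorem stmt17 (p N : ℕ) (hp : p.Prime) (hodd : Odd p) (hN : 1 ≤ N)
    (h4 : (4 : ℤ) ∣ (p : ℤ) ^ N - 1) :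
    ∀ η : ℤ, 0 ≤ η → η ≤ ((p : ℤ) ^ N - 3) / 2 → η % (p : ℤ) ≠ ((p : ℤ) - 1) / 2 →
      ∀ N', 1 ≤ N' → N' ≤ N →
        brk p N' η ≤ min (2 * brk p N' (((p : ℤ) ^ N - 1) / 4))
          ((p : ℤ) ^ N' - 2 - 2 * brk p N' (((p : ℤ) ^ N - 1) / 4)) := by
  intro η hη0 hη1 hηp N' hN'1 hN'N
  have hp3n : 3 ≤ p := by
    have h2 := hp.two_le
    rcases hodd with ⟨t, ht⟩
    omega
  have hp3 : (3 : ℤ) ≤ (p : ℤ) := by exact_mod_cast hp3n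
  have hpodd : Odd ((p : ℤ)) := by exact_mod_cast hodd
  obtain ⟨s, hs⟩ := hpodd
  set q : ℤ := (p : ℤ) ^ N' with hqdef
  have hq : (p : ℤ) ≤ q := le_self_pow₀ (by linarith) (by omega)
  have hq3 : (3 : ℤ) ≤ q := le_trans hp3 hq
  have hqpos : (0 : ℤ) < q := by linarith
  have hqodd : Odd q := Odd.pow (by exact_mod_cast hodd)
  obtain ⟨m, hm⟩ := hqodd
  have hpq : (p : ℤ) ∣ q := dvd_pow_self _ (by omega)
  have hqQ : q ∣ (p : ℤ) ^ N := pow_dvd_pow _ hN'N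
  set L : ℤ := ((p : ℤ) ^ N - 1) / 4 with hLdef
  have hL : 4 * L = (p : ℤ) ^ N - 1 := Int.mul_ediv_cancel' h4
  set r : ℤ := L % q with hrdef
  have hr0 : 0 ≤ r := Int.emod_nonneg _ (by linarith)
  have hr1 : r < q := Int.emod_lt_of_pos _ hqpos
  have hdiff : q ∣ L - r := Int.dvd_self_sub_of_emod_eq rfl
  have hdr : q ∣ 4 * r + 1 := by
    have h1 : q ∣ 4 * L + 1 := by
      have : 4 * L + 1 = (p : ℤ) ^ N := by omega
      rw [this]; exact hqQ
    have h2 : q ∣ 4 * (L - r) := Dvd.dvd.mul_left hdiff 4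
    have : 4 * r + 1 = (4 * L + 1) - 4 * (L - r) := by ring
    rw [this]; exact dvd_sub h1 h2
  obtain ⟨k, hk⟩ := hdr
  have hk1 : 1 ≤ k := by nlinarith
  have hk3 : k ≤ 3 := by nlinarith
  -- η mod q is not (q-1)/2
  set e : ℤ := η % q with hedef
  have he0 : 0 ≤ e := Int.emod_nonneg _ (by linarith)
  have he1 : e < q := Int.emod_lt_of_pos _ hqpos
  have hne : e ≠ m := by
    intro hem
    apply hηp
    have h1 : η % q % (p : ℤ) = η % (p : ℤ) := Int.emod_emod_of_dvd η hpq
    rw [← h1, ← hedef, hem]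
    set t : ℤ := m % (p : ℤ) with htdef
    have ht0 : 0 ≤ t := Int.emod_nonneg _ (by linarith)
    have ht1 : t < (p : ℤ) := Int.emod_lt_of_pos _ (by linarith)
    have hmt : (p : ℤ) ∣ m - t := Int.dvd_self_sub_of_emod_eq rfl
    have hdt : (p : ℤ) ∣ 2 * t + 1 := by
      have h2 : (p : ℤ) ∣ 2 * (m - t) := Dvd.dvd.mul_left hmt 2
      have h3 : (2 : ℤ) * t + 1 = q - 2 * (m - t) := by omega
      rw [h3]; exact dvd_sub hpq h2
    obtain ⟨j, hj⟩ := hdt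
    have hj1 : 1 ≤ j := by nlinarith
    have hj2 : j ≤ 1 := by nlinarith
    have : j = 1 := le_antisymm hj2 hj1
    rw [this, mul_one] at hj
    omega
  simp only [brk, ← hqdef, ← hedef, ← hrdef, le_min_iff]
  rcases abs_cases (e - (q - 1) / 2) with ⟨ha1, ha2⟩ | ⟨ha1, ha2⟩ <;>
    rcases abs_cases (r - (q - 1) / 2) with ⟨hb1, hb2⟩ | ⟨hb1, hb2⟩ <;>
      rw [ha1, hb1] <;> interval_cases k <;> omega
end
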